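/- For every k ∈ ℕ and every z ∈ ℂ with 0 < |z| < 1, the series ∑_{b∈ℕ, b odd} b^{2k+1}·z^{b−1} converges with sum equal to deriv((z·d/dz)^{2k} ψ)(z), where ψ(w) = w/(1−w²). -/

import Mathlib

/-- The Euler operator `f ↦ (z·d/dz) f`, i.e. `w ↦ w · f'(w)`. -/
noncomputable def eulerOp (f : ℂ → ℂ) : ℂ → ℂ := fun w => w * deriv f w

/-- `ψ(w) = w / (1 - w²)`. -/
noncomputable def psiFn : ℂ → ℂ := fun w => w / (1 - w ^ 2)

/-- Coefficients of the odd power series `∑_{b odd} b^n z^b`. -/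
noncomputable def oddCoeff (n b : ℕ) : ℂ := if Odd b then (b : ℂ) ^ n else 0

lemma summable_aux (n : ℕ) {r : ℝ} (hr0 : 0 < r) (hr1 : r < 1) :
    Summable (fun b : ℕ => (b : ℝ) ^ (n + 1) * r ^ (b - 1)) := by
  have hbase : Summable (fun b : ℕ => (b : ℝ) ^ (n + 1) * r ^ b) :=
    summable_pow_mul_geometric_of_norm_lt_one (n + 1)
      (by rw [Real.norm_eq_abs, abs_of_pos hr0]; exact hr1)
  refine Summable.of_nonneg_of_le (fun b => ?_) (fun b => ?_) (hbase.mul_left r⁻¹)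
  · positivity
  · rcases Nat.eq_zero_or_pos b with hb | hb
    · subst hb; simp
    · have hrr : r ^ (b - 1) * r = r ^ b := by
        rw [← pow_succ]; congr 1; omega
      apply le_of_eq
      rw [← hrr]
      field_simp

/-- Termwise differentiation of a power series on the unit disc. -/
lemma hasSum_deriv_aux (a : ℕ → ℂ) (n : ℕ) (ha : ∀ b, ‖a b‖ ≤ (b : ℝ) ^ n)
    (f : ℂ → ℂ) (H : ∀ w : ℂ, ‖w‖ < 1 → HasSum (fun b : ℕ => a b * w ^ b) (f w))
    (z : ℂ) (hz : ‖z‖ < 1) :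
    HasSum (fun b : ℕ => a b * ((b : ℂ) * z ^ (b - 1))) (deriv f z) := by
  set r : ℝ := (1 + ‖z‖) / 2 with hr
  have hzr : ‖z‖ < r := by rw [hr]; linarith
  have hr0 : 0 < r := lt_of_le_of_lt (norm_nonneg z) hzr
  have hr1 : r < 1 := by rw [hr]; linarith
  set u : ℕ → ℝ := fun b => (b : ℝ) ^ (n + 1) * r ^ (b - 1) with hu
  have hu_sum : Summable u := summable_aux n hr0 hr1
  set g' : ℕ → ℂ → ℂ := fun b y => a b * ((b : ℂ) * y ^ (b - 1)) with hg'def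
  have hbound : ∀ b y, y ∈ Metric.ball (0 : ℂ) r → ‖g' b y‖ ≤ u b := by
    intro b y hy
    have hyr : ‖y‖ ≤ r := by
      have := mem_ball_zero_iff.mp hy; exact this.le
    calc ‖a b * ((b : ℂ) * y ^ (b - 1))‖
        = ‖a b‖ * ((b : ℝ) * ‖y‖ ^ (b - 1)) := by
          simp [norm_mul, norm_pow]
      _ ≤ (b : ℝ) ^ n * ((b : ℝ) * r ^ (b - 1)) := by
          apply mul_le_mul (ha b) ?_ (by positivity) (by positivity)
          exact mul_le_mul_of_nonneg_left
            (pow_le_pow_left₀ (norm_nonneg y) hyr _) (Nat.cast_nonneg b)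
      _ = u b := by rw [hu]; ring
  have hderiv : ∀ b y, y ∈ Metric.ball (0 : ℂ) r →
      HasDerivAt (fun w => a b * w ^ b) (g' b y) y := by
    intro b y _
    exact (hasDerivAt_pow b y).const_mul (a b)
  have hz_mem : z ∈ Metric.ball (0 : ℂ) r := mem_ball_zero_iff.mpr hzr
  have hsum0 : Summable fun b => a b * z ^ b := (H z hz).summable
  have hmain : HasDerivAt (fun w => ∑' b, a b * w ^ b) (∑' b, g' b z) z :=
    hasDerivAt_tsum_of_isPreconnected hu_sum Metric.isOpen_ball
      (convex_ball (0:ℂ) r).isPreconnected hderiv hbound hz_mem hsum0 hz_mem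
  have heq : f =ᶠ[nhds z] (fun w => ∑' b, a b * w ^ b) := by
    filter_upwards [Metric.isOpen_ball.mem_nhds (mem_ball_zero_iff.mpr hz)] with w hw
    exact ((H w (mem_ball_zero_iff.mp hw)).tsum_eq).symm
  have hf : HasDerivAt f (∑' b, g' b z) z := hmain.congr_of_eventuallyEq heq
  have hsummable : Summable fun b => g' b z :=
    Summable.of_norm_bounded hu_sum (fun b => hbound b z hz_mem)
  have := hsummable.hasSum
  rwa [hf.deriv]

/-- The key identity: `∑_{b odd} b^n z^b = (z d/dz)^n ψ(z)` on the unit disc. -/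
lemma key (n : ℕ) : ∀ z : ℂ, ‖z‖ < 1 →
    HasSum (fun b : ℕ => oddCoeff n b * z ^ b) (eulerOp^[n] psiFn z) := by
  induction n with
  | zero =>
    intro z hz
    have h2 : ‖z ^ 2‖ < 1 := by
      rw [norm_pow]
      calc ‖z‖ ^ 2 ≤ ‖z‖ * 1 := by
            rw [sq]; exact mul_le_mul_of_nonneg_left hz.le (norm_nonneg z)
        _ < 1 := by simpa using hz
    have hgeo := (hasSum_geometric_of_norm_lt_one h2).mul_left z
    have hgeo' : HasSum (fun m : ℕ => oddCoeff 0 (2 * m + 1) * z ^ (2 * m + 1))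
        (psiFn z) := by
      have heq : ∀ m : ℕ, oddCoeff 0 (2 * m + 1) * z ^ (2 * m + 1) = z * (z ^ 2) ^ m := by
        intro m
        have hodd : Odd (2 * m + 1) := ⟨m, by ring⟩
        rw [oddCoeff, if_pos hodd, pow_zero, one_mul, pow_succ, pow_mul]
        ring
      rw [show psiFn z = z * (1 - z ^ 2)⁻¹ from div_eq_mul_inv _ _]
      exact HasSum.congr_fun hgeo (fun m => heq m)
    have hinj : Function.Injective (fun m : ℕ => 2 * m + 1) := by
      intro a b h
      change 2 * a + 1 = 2 * b + 1 at h
      omega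
    rw [Function.iterate_zero_apply]
    refine (Function.Injective.hasSum_iff hinj ?_).mp hgeo'
    intro b hb
    have hnotodd : ¬ Odd b := by
      intro ⟨m, hm⟩
      exact hb ⟨m, by change 2 * m + 1 = b; omega⟩
    simp [oddCoeff, hnotodd]
  | succ n ih =>
    intro z hz
    have ha : ∀ b : ℕ, ‖oddCoeff n b‖ ≤ (b : ℝ) ^ n := by
      intro b
      by_cases h : Odd b
      · simp [oddCoeff, h]
      · simp only [oddCoeff, if_neg h, norm_zero]
        positivity
    have hd := hasSum_deriv_aux (oddCoeff n) n ha (eulerOp^[n] psiFn) ih z hz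
    have hmul := hd.mul_left z
    have hiter : eulerOp^[n + 1] psiFn z = z * deriv (eulerOp^[n] psiFn) z := by
      rw [Function.iterate_succ_apply']; rfl
    rw [hiter]
    refine HasSum.congr_fun hmul (fun b => ?_)
    by_cases h : Odd b
    · have hb1 : 1 ≤ b := h.pos
      have hzz : z ^ b = z * z ^ (b - 1) := by
        rw [← pow_succ']
        congr 1
        omega
      simp only [oddCoeff, if_pos h, hzz, pow_succ]
      ring
    · simp [oddCoeff, h]

/-- Odd basis elements of the Do–Norbury space `V(z)`: for `0 < |z| < 1`,
`∑_{b odd} b^{2k+1}·z^{b-1} = d/dz (z·d/dz)^{2k} (z/(1-z²))`. -/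
theorem odd_basis_closed_form (k : ℕ) (z : ℂ) (hz0 : 0 < ‖z‖) (hz1 : ‖z‖ < 1) :
    HasSum
      (fun b : ℕ => if Odd b then (b : ℂ) ^ (2 * k + 1) * z ^ ((b : ℤ) - 1) else 0)
      (deriv (eulerOp^[2 * k] psiFn) z) := by
  have ha : ∀ b : ℕ, ‖oddCoeff (2 * k) b‖ ≤ (b : ℝ) ^ (2 * k) := by
    intro b
    by_cases h : Odd b
    · simp [oddCoeff, h]
    · simp only [oddCoeff, if_neg h, norm_zero]
      positivity
  have hd := hasSum_deriv_aux (oddCoeff (2 * k)) (2 * k) ha (eulerOp^[2 * k] psiFn)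
    (key (2 * k)) z hz1
  refine HasSum.congr_fun hd (fun b => ?_)
  by_cases h : Odd b
  · have hb1 : 1 ≤ b := h.pos
    have hexp : ((b : ℤ) - 1) = ((b - 1 : ℕ) : ℤ) := by omega
    simp only [if_pos h, oddCoeff, hexp, zpow_natCast, pow_succ]
    ring
  · simp [oddCoeff, h]
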